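/- arXiv:2104.04225 — 3 statements merged into one kernel-verified Lean document; each statement's English description precedes it below -/
import Mathlib

section
/- Let C be a coherent configuration whose fibers are symmetric association schemes with a basis {E_ℓ^{(i,j)}} satisfying (B1)-(B4). If for all i,j there exist polynomials v_h^{(i,j)} of degree h with √(|X_i||X_j|) E_h^{(i,j)} = v_h^{(i,j)}(√(|X_i||X_j|) E_1^{(i,j)}) entrywise, then each Krein matrix B̂_1^{(i,j)} = (q_{1,m,n}^{(i,j)})_{m,n} is tridiagonal with nonzero superdiagonal and subdiagonal entries. -/
/-!
Put `A_h = √(|X_i||X_j|) • E_h^{(i,j)}`. Entrywise evaluation of polynomials at `A_1` turns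
products into Hadamard products, so `A_1 ⊙ A_m` is `v_1 v_m` evaluated entrywise at `A_1`.
Since `v_1 v_m` has degree `m + 1`, it is a combination of `v_0, …, v_{m+1}` with a nonzero
coefficient at `v_{m+1}`; by linear independence of the `A_h` these coefficients are the Krein
numbers `q_{1,m,n}`. The symmetry relation `m_ℓ q_{1,h,ℓ} = m_h q_{1,ℓ,h}` at `ℓ = h + 1` then
shows `m_h ≠ 0` and `q_{1,h+1,h} ≠ 0`, and transfers the vanishing above the band to below it.
-/

open Matrix Finset

namespace Polynomial

variable {K : Type*} [Field K]

theorem exists_eq_sum_range_smul_of_degree_eq {v : ℕ → K[X]} {d : ℕ}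
    (hv : ∀ n ≤ d, (v n).degree = n) {p : K[X]} (hp : p.natDegree ≤ d) :
    ∃ c : ℕ → K, (∀ n, d < n → c n = 0) ∧ p = ∑ n ∈ range (d + 1), c n • v n := by
  classical
  let S : Sequence K := ⟨fun n => if n ≤ d then v n else X ^ n, fun n => by
    split_ifs with h
    exacts [hv n h, degree_X_pow n]⟩
  have hS : ∀ n ≤ d, S n = v n := fun n hn => if_pos hn
  have hmem : p ∈ Submodule.span K (S '' Set.Iic d) := by
    rw [S.span_degreeLE fun n _ => (leadingCoeff_ne_zero.2 (S.ne_zero n)).isUnit]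
    exact mem_degreeLE.2 (degree_le_of_natDegree_le hp)
  obtain ⟨l, hl, rfl⟩ := (Finsupp.mem_span_image_iff_linearCombination K).1 hmem
  refine ⟨l, fun n hn => Finsupp.notMem_support_iff.1 fun h => (hl h).not_gt hn, ?_⟩
  rw [Finsupp.linearCombination_apply, Finsupp.sum_of_support_subset l
    (fun n hn => mem_range_succ_iff.2 (hl hn)) _ (by simp)]
  exact sum_congr rfl fun n hn => by rw [hS n (mem_range_succ_iff.1 hn)]

theorem coeff_sum_range_smul_of_natDegree_le {v : ℕ → K[X]} {d : ℕ}
    (hv : ∀ n < d, (v n).natDegree ≤ n) (c : ℕ → K) :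
    (∑ n ∈ range (d + 1), c n • v n).coeff d = c d * (v d).coeff d := by
  rw [sum_range_succ, coeff_add, finsetSum_coeff, coeff_smul, smul_eq_mul, add_eq_right]
  refine sum_eq_zero fun n hn => ?_
  rw [coeff_smul, coeff_eq_zero_of_natDegree_lt ((hv n (mem_range.1 hn)).trans_lt
    (mem_range.1 hn)), smul_zero]

end Polynomial

namespace Matrix

variable {m n K : Type*}

theorem rank_ne_zero_of_ne_zero [Field K] [Fintype n] {A : Matrix m n K} (hA : A ≠ 0) :
    A.rank ≠ 0 := by
  classical
  rw [rank, Ne, Submodule.finrank_eq_zero, LinearMap.range_eq_bot]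
  exact fun h => hA (toLin'.injective (by rw [toLin'_apply', h, map_zero]))

theorem map_eval_mul [CommSemiring K] (A : Matrix m n K) (p q : Polynomial K) :
    A.map (p * q).eval = A.map p.eval ⊙ A.map q.eval := by
  ext x y
  simp [hadamard_apply]

theorem map_eval_sum_smul [CommSemiring K] (A : Matrix m n K) (s : Finset ℕ) (c : ℕ → K)
    (v : ℕ → Polynomial K) :
    A.map (∑ k ∈ s, c k • v k).eval = ∑ k ∈ s, c k • A.map (v k).eval := by
  ext x y
  simp [sum_apply, Polynomial.eval_finsetSum]

theorem eq_zero_of_hadamard_self_eq_zero [MulZeroClass K] [NoZeroDivisors K] {A : Matrix m n K}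
    (h : A ⊙ A = 0) : A = 0 := by
  ext x y
  exact mul_self_eq_zero.1 (congr_fun₂ h x y)

end Matrix

theorem LinearIndependent.eq_of_sum_range_smul_eq {R M : Type*} [Semiring R] [AddCommMonoid M]
    [Module R M] {r : ℕ} {A : ℕ → M} (hA : LinearIndependent R fun ℓ : Fin (r + 1) => A ℓ)
    {a b : ℕ → R} (h : ∑ n ∈ range (r + 1), a n • A n = ∑ n ∈ range (r + 1), b n • A n)
    {n : ℕ} (hn : n ≤ r) : a n = b n := by
  rw [← Fin.sum_univ_eq_sum_range (fun n => a n • A n),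
    ← Fin.sum_univ_eq_sum_range (fun n => b n • A n)] at h
  exact congr_fun (hA.fintypeLinearCombination_injective (a₁ := fun ℓ => a ℓ)
    (a₂ := fun ℓ => b ℓ) (by simpa [Fintype.linearCombination_apply] using h))
    ⟨n, Nat.lt_succ_of_le hn⟩

section Tridiagonal

open Polynomial

variable {ι κ K : Type*} [Field K]

theorem hadamard_coeffs_tridiagonal {A : ℕ → Matrix ι κ K} {r : ℕ}
    (hA : LinearIndependent K fun ℓ : Fin (r + 1) => A ℓ) {v : ℕ → K[X]}
    (hv : ∀ h ≤ r, (v h).natDegree = h ∧ A h = (A 1).map (v h).eval) {k : ℕ} (hk : k + 1 ≤ r)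
    {q : ℕ → K} (hq : A 1 ⊙ A k = ∑ n ∈ range (r + 1), q n • A n) :
    (∀ n ≤ r, k + 2 ≤ n → q n = 0) ∧ q (k + 1) ≠ 0 := by
  have hv0 : ∀ h ≤ r, v h ≠ 0 := fun h hh hvh => by
    refine hA.ne_zero (⟨h, Nat.lt_succ_of_le hh⟩ : Fin (r + 1)) ?_
    rw [(hv h hh).2, hvh]
    ext
    simp
  have hdeg : ∀ h ≤ k + 1, (v h).degree = h := fun h hh => by
    rw [degree_eq_natDegree (hv0 h (by omega)), (hv h (by omega)).1]
  have hprod : (v 1 * v k).natDegree = k + 1 := by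
    rw [natDegree_mul (hv0 1 (by omega)) (hv0 k (by omega)), (hv 1 (by omega)).1,
      (hv k (by omega)).1, add_comm]
  obtain ⟨c, hc0, hc⟩ := exists_eq_sum_range_smul_of_degree_eq hdeg hprod.le
  have hctop : c (k + 1) ≠ 0 := by
    have htop : (v 1 * v k).coeff (k + 1) = c (k + 1) * (v (k + 1)).coeff (k + 1) := by
      rw [hc]
      exact coeff_sum_range_smul_of_natDegree_le (fun n hn => (hv n (by omega)).1.le) c
    intro hc1
    rw [hc1, zero_mul, ← hprod, coeff_natDegree, leadingCoeff_eq_zero] at htop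
    exact mul_ne_zero (hv0 1 (by omega)) (hv0 k (by omega)) htop
  have hexp : A 1 ⊙ A k = ∑ n ∈ range (r + 1), c n • A n :=
    calc A 1 ⊙ A k = (A 1).map (v 1 * v k).eval := by
          rw [map_eval_mul, ← (hv 1 (by omega)).2, ← (hv k (by omega)).2]
      _ = ∑ n ∈ range (k + 2), c n • A n := by
          rw [hc, map_eval_sum_smul]
          exact sum_congr rfl fun n hn => by
            rw [← (hv n (by simp at hn; omega)).2]
      _ = ∑ n ∈ range (r + 1), c n • A n :=
          sum_subset (range_subset_range.2 (by omega)) fun n _ hn => by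
            rw [hc0 n (by simp at hn; omega), zero_smul]
  have hqc : ∀ n ≤ r, q n = c n := fun n hn =>
    hA.eq_of_sum_range_smul_eq (hq.symm.trans hexp) hn
  exact ⟨fun n hn hkn => (hqc n hn).trans (hc0 n (by omega)), (hqc (k + 1) hk).symm ▸ hctop⟩

theorem hadamard_smul_smul_eq_sum_smul {E : ℕ → Matrix ι κ K} {N : K} {s : Finset ℕ}
    {a b : ℕ} {q : ℕ → K} (h : E a ⊙ E b = N⁻¹ • ∑ n ∈ s, q n • E n) :
    (N • E a) ⊙ (N • E b) = ∑ n ∈ s, q n • (N • E n) := by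
  rw [smul_hadamard, hadamard_smul, h, smul_smul, smul_smul, mul_self_mul_inv, smul_sum]
  exact sum_congr rfl fun n _ => smul_comm N (q n) (E n)

theorem hadamard_coeffs_tridiagonal_of_smul {E : ℕ → Matrix ι κ K} {r : ℕ}
    (hE : LinearIndependent K fun ℓ : Fin (r + 1) => E ℓ) {N : K} {v : ℕ → K[X]}
    (hv : ∀ h ≤ r, (v h).natDegree = h ∧ N • E h = (N • E 1).map (v h).eval)
    {q : ℕ → ℕ → K} (hq : ∀ k ≤ r, E 1 ⊙ E k = N⁻¹ • ∑ n ∈ range (r + 1), q k n • E n)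
    {k : ℕ} (hk : k + 1 ≤ r) :
    (∀ n ≤ r, k + 2 ≤ n → q k n = 0) ∧ q k (k + 1) ≠ 0 := by
  have hN : N ≠ 0 := by
    -- `N = 0` would turn `hq` into `E 1 ⊙ E 1 = 0⁻¹ • _ = 0`
    rintro rfl
    refine hE.ne_zero (⟨1, by omega⟩ : Fin (r + 1)) (eq_zero_of_hadamard_self_eq_zero ?_)
    rw [hq 1 (by omega), _root_.inv_zero, zero_smul]
  have hA : LinearIndependent K fun ℓ : Fin (r + 1) => N • E ℓ :=
    hE.units_smul fun _ => Units.mk0 N hN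
  exact hadamard_coeffs_tridiagonal hA hv hk
    (hadamard_smul_smul_eq_sum_smul (hq k (by omega)))

end Tridiagonal

theorem stmt3_general (nf : ℕ) (X : Fin nf → Type) [∀ i, Fintype (X i)]
    (r : Fin nf → Fin nf → ℕ)
    (E : Fin nf → Fin nf → ℕ → Matrix ((i : Fin nf) × X i) ((i : Fin nf) × X i) ℝ)
    (q : Fin nf → Fin nf → ℕ → ℕ → ℕ → ℝ)
    (hB2 : ∀ i j, LinearIndependent ℝ (fun ℓ : Fin (r i j + 1) => E i j (ℓ : ℕ)))
    (hq : ∀ i j ℓ m, ℓ ≤ r i j → m ≤ r i j →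
      (E i j ℓ).hadamard (E i j m) =
        (Real.sqrt ((Fintype.card (X i) : ℝ) * (Fintype.card (X j) : ℝ)))⁻¹ •
          ∑ n ∈ Finset.range (r i j + 1), q i j ℓ m n • E i j n)
    (hm : ∀ i j h ℓ, h ≤ r i j → ℓ ≤ r i j →
      ((E i j ℓ).rank : ℝ) * q i j 1 h ℓ = ((E i i h).rank : ℝ) * q i j 1 ℓ h)
    (hpoly : ∀ i j, ∃ v : ℕ → Polynomial ℝ, ∀ h, h ≤ r i j → (v h).natDegree = h ∧
      Real.sqrt ((Fintype.card (X i) : ℝ) * (Fintype.card (X j) : ℝ)) • E i j h =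
        Matrix.of fun x y => (v h).eval
          ((Real.sqrt ((Fintype.card (X i) : ℝ) * (Fintype.card (X j) : ℝ)) •
            E i j 1) x y)) :
    ∀ i j, (∀ m n, m ≤ r i j → n ≤ r i j → (m + 2 ≤ n ∨ n + 2 ≤ m) → q i j 1 m n = 0) ∧
      (∀ m, m + 1 ≤ r i j → q i j 1 m (m + 1) ≠ 0 ∧ q i j 1 (m + 1) m ≠ 0) := by
  intro i j
  obtain ⟨v, hv⟩ := hpoly i j
  have upper : ∀ k, k + 1 ≤ r i j →
      (∀ n ≤ r i j, k + 2 ≤ n → q i j 1 k n = 0) ∧ q i j 1 k (k + 1) ≠ 0 := fun k hk =>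
    hadamard_coeffs_tridiagonal_of_smul (hB2 i j) hv
      (fun k' hk' => hq i j 1 k' (by omega) hk') hk
  have lower : ∀ k, k + 1 ≤ r i j → ((E i i k).rank : ℝ) ≠ 0 ∧ q i j 1 (k + 1) k ≠ 0 :=
    fun k hk => by
      have hE : E i j (k + 1) ≠ 0 := by simpa using (hB2 i j).ne_zero ⟨k + 1, by omega⟩
      refine mul_ne_zero_iff.1 ?_
      rw [← hm i j k (k + 1) (by omega) hk]
      exact mul_ne_zero (Nat.cast_ne_zero.2 (rank_ne_zero_of_ne_zero hE)) (upper k hk).2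
  refine ⟨fun a b ha hb hab => ?_, fun k hk => ⟨(upper k hk).2, (lower k hk).2⟩⟩
  rcases hab with hab | hab
  · exact (upper a (by omega)).1 b hb hab
  · have hsym := hm i j b a hb ha
    rw [(upper b (by omega)).1 a ha hab, mul_zero, eq_comm] at hsym
    exact (mul_eq_zero.1 hsym).resolve_left (lower b (by omega)).1

/-- For a coherent configuration whose fibers are symmetric association schemes with a basis
`E_ℓ^{(i,j)}` satisfying (B1)-(B4): if for all `i,j` there are polynomials `v_h^{(i,j)}` of
degree `h` with `√(|X_i||X_j|) E_h^{(i,j)} = v_h^{(i,j)}(√(|X_i||X_j|) E_1^{(i,j)})` entrywise,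
then every Krein matrix `B̂_1^{(i,j)}` is tridiagonal with nonzero super- and subdiagonal. -/
theorem stmt3 (nf : ℕ) (X : Fin nf → Type) [∀ i, Fintype (X i)] [∀ i, DecidableEq (X i)]
    (r : Fin nf → Fin nf → ℕ)
    (E : Fin nf → Fin nf → ℕ → Matrix ((i : Fin nf) × X i) ((i : Fin nf) × X i) ℝ)
    (q : Fin nf → Fin nf → ℕ → ℕ → ℕ → ℝ)
    (hsupp : ∀ i j ℓ, ℓ ≤ r i j → ∀ v w : (i : Fin nf) × X i,
      (v.1 ≠ i ∨ w.1 ≠ j) → E i j ℓ v w = 0)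
    (hB1 : ∀ i j, E i j 0 = Matrix.of fun v w =>
      if v.1 = i ∧ w.1 = j then
        (Real.sqrt ((Fintype.card (X i) : ℝ) * (Fintype.card (X j) : ℝ)))⁻¹ else 0)
    (hB2 : ∀ i j, LinearIndependent ℝ (fun ℓ : Fin (r i j + 1) => E i j (ℓ : ℕ)))
    (hB3 : ∀ i j ℓ, ℓ ≤ r i j → (E i j ℓ)ᵀ = E j i ℓ)
    (hB4 : ∀ i j i' j' ℓ ℓ', ℓ ≤ r i j → ℓ' ≤ r i' j' →
      E i j ℓ * E i' j' ℓ' = if ℓ = ℓ' ∧ j = i' then E i j' ℓ else 0)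
    (hq : ∀ i j ℓ m, ℓ ≤ r i j → m ≤ r i j →
      (E i j ℓ).hadamard (E i j m) =
        (Real.sqrt ((Fintype.card (X i) : ℝ) * (Fintype.card (X j) : ℝ)))⁻¹ •
          ∑ n ∈ Finset.range (r i j + 1), q i j ℓ m n • E i j n)
    (hm : ∀ i j h ℓ, h ≤ r i j → ℓ ≤ r i j →
      ((E i j ℓ).rank : ℝ) * q i j 1 h ℓ = ((E i i h).rank : ℝ) * q i j 1 ℓ h)
    (hpoly : ∀ i j, ∃ v : ℕ → Polynomial ℝ, ∀ h, h ≤ r i j → (v h).natDegree = h ∧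
      Real.sqrt ((Fintype.card (X i) : ℝ) * (Fintype.card (X j) : ℝ)) • E i j h =
        Matrix.of fun x y => (v h).eval
          ((Real.sqrt ((Fintype.card (X i) : ℝ) * (Fintype.card (X j) : ℝ)) •
            E i j 1) x y)) :
    ∀ i j, (∀ m n, m ≤ r i j → n ≤ r i j → (m + 2 ≤ n ∨ n + 2 ≤ m) → q i j 1 m n = 0) ∧
      (∀ m, m + 1 ≤ r i j → q i j 1 m (m + 1) ≠ 0 ∧ q i j 1 (m + 1) m ≠ 0) :=
  stmt3_general nf X r E q hB2 hq hm hpoly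
end

section
/- For a coherent configuration with basis satisfying (B1)-(B4), the intersection numbers admit the explicit expression p_{ℓ,m,n}^{(i,j,h)} = (k_ℓ^{(i,j)} k_m^{(j,h)} / |X_h|) Σ_ν (1/(m_ν^{(i,i)})^2) q_ν^{(i,j)}(ℓ) q_ν^{(j,h)}(m) q_ν^{(h,i)}(n), the sum over ν from 0 to min(r̃_{i,j}, r̃_{j,h}, r̃_{h,i}). -/
/-!
Compute `tr (A_ℓ^{(i,j)} A_m^{(j,h)} A_n^{(h,i)})` in two ways. The matrices `A_n^{(i,h)}` are
orthogonal for `(M, N) ↦ tr (M Nᵀ)`, with `tr (A_n A_nᵀ) = |X_i| k_n^{(i,h)}`, so expanding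
`A_ℓ A_m` by the intersection numbers gives `p_{ℓ,m,n} |X_i| k_n^{(i,h)}`. Expanding each `A` in
the basis `E` by the first eigenmatrix `P`, (B4) collapses the triple product to
`Σ_ν P P P E_ν^{(i,i)}`. Finally, evaluating `tr (A_ℓ^{(p,q)} E_ν^{(q,p)})` through `P` and
through `Q` gives `P_ℓ(ν) m_ν = Q_ν(ℓ) |X_p| k_ℓ / √(|X_p| |X_q|)`, and the normalising square
roots cancel around the triangle `i → j → h → i`.
-/

open Matrix Finset

theorem LinearIndependent.of_range_subset_span {K V ι : Type*} [DivisionRing K] [AddCommGroup V]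
    [Module K V] [Fintype ι] {v w : ι → V} (hv : LinearIndependent K v)
    (hvw : Set.range v ⊆ Submodule.span K (Set.range w)) : LinearIndependent K w := by
  rw [linearIndependent_iff_card_eq_finrank_span]
  have := FiniteDimensional.span_of_finite K (Set.finite_range w)
  refine le_antisymm ?_ (finrank_range_le_card w)
  calc Fintype.card ι = (Set.range v).finrank K := (finrank_span_eq_card hv).symm
    _ ≤ (Set.range w).finrank K := Submodule.finrank_mono (Submodule.span_le.mpr hvw)

theorem Finset.sum_sum_sum_ite_and {ι M : Type*} [DecidableEq ι] [AddCommMonoid M]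
    (s t u : Finset ι) (f : ι → M) :
    ∑ a ∈ s, ∑ b ∈ t, ∑ c ∈ u, (if a = b ∧ b = c then f a else 0) = ∑ ν ∈ s ∩ t ∩ u, f ν := by
  have inner : ∀ a b, ∑ c ∈ u, (if a = b ∧ b = c then f a else 0) =
      if a = b then (if b ∈ u then f b else 0) else 0 := by
    intro a b
    by_cases hab : a = b
    · subst hab; simp only [true_and, if_true, sum_ite_eq]
    · simp [hab]
  simp only [inner, sum_ite_eq, sum_ite_mem, inter_assoc]

theorem Matrix.trace_sum_smul_mul {n ι : Type*} [Fintype n] (s : Finset ι) (c : ι → ℝ)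
    (B : ι → Matrix n n ℝ) (C : Matrix n n ℝ) :
    trace ((∑ x ∈ s, c x • B x) * C) = ∑ x ∈ s, c x * trace (B x * C) := by
  simp only [Matrix.sum_mul, trace_sum, smul_mul, trace_smul, smul_eq_mul]

theorem Real.sqrt_mul_mul_sqrt_mul_mul_sqrt_mul {a b c : ℝ} (ha : 0 ≤ a) (hb : 0 ≤ b)
    (hc : 0 ≤ c) : √(a * b) * √(b * c) * √(c * a) = a * b * c := by
  rw [← Real.sqrt_mul (by positivity), ← Real.sqrt_mul (by positivity),
    show a * b * (b * c) * (c * a) = (a * b * c) ^ 2 by ring, Real.sqrt_sq (by positivity)]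

theorem Matrix.trace_mul_transpose_self_pos {m n : Type*} [Fintype m] [Fintype n]
    {M : Matrix m n ℝ} (hM : M ≠ 0) : 0 < trace (M * Mᵀ) := by
  have h := (trace_mul_conjTranspose_self_eq_zero_iff (A := M)).not.mpr hM
  rw [conjTranspose_eq_transpose_of_trivial] at h
  refine lt_of_le_of_ne ?_ (Ne.symm h)
  rw [← sum_hadamard_eq]
  exact sum_nonneg fun _ _ => sum_nonneg fun _ _ => mul_self_nonneg _

theorem mul_mul_mul_eq_of_mul_eq_inv_sqrt_mul {a b c t P₁ P₂ P₃ Q₁ Q₂ Q₃ k₁ k₂ k₃ : ℝ}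
    (ha : 0 < a) (hb : 0 < b) (hc : 0 < c) (ht : t ≠ 0)
    (h₁ : P₁ * t = (√(a * b))⁻¹ * (Q₁ * (a * k₁)))
    (h₂ : P₂ * t = (√(b * c))⁻¹ * (Q₂ * (b * k₂)))
    (h₃ : P₃ * t = (√(c * a))⁻¹ * (Q₃ * (c * k₃))) :
    P₁ * P₂ * P₃ * t = k₁ * k₂ * k₃ * (1 / t ^ 2 * (Q₁ * Q₂ * Q₃)) := by
  have hs := Real.sqrt_mul_mul_sqrt_mul_mul_sqrt_mul ha.le hb.le hc.le
  rw [eq_inv_mul_iff_mul_eq₀ (by positivity)] at h₁ h₂ h₃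
  have hcube : a * b * c * (P₁ * P₂ * P₃ * t ^ 3) =
      a * b * c * (Q₁ * Q₂ * Q₃ * (k₁ * k₂ * k₃)) :=
    calc a * b * c * (P₁ * P₂ * P₃ * t ^ 3)
        = √(a * b) * (P₁ * t) * (√(b * c) * (P₂ * t)) * (√(c * a) * (P₃ * t)) := by
          rw [← hs]; ring
      _ = _ := by rw [h₁, h₂, h₃]; ring
  have := mul_left_cancel₀ (by positivity) hcube
  field_simp
  linear_combination this

variable {ι : Type*} [Fintype ι] {X : ι → Type*} [∀ i, Fintype (X i)]

/-- `A i j ℓ` (`ℓ ≤ r i j`) is the adjacency matrix `A_ℓ^{(i,j)}`, extended by zero from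
`X i × X j` to `Σ i, X i`, and `k i j ℓ` its valency. -/
structure IsCoherentConfiguration (r : ι → ι → ℕ)
    (A : ι → ι → ℕ → Matrix (Σ i, X i) (Σ i, X i) ℝ) (k : ι → ι → ℕ → ℝ) : Prop where
  apply_eq_zero_off_block : ∀ i j ℓ, ℓ ≤ r i j → ∀ v w : Σ i, X i,
    (v.1 ≠ i ∨ w.1 ≠ j) → A i j ℓ v w = 0
  apply_eq_zero_or_eq_one : ∀ i j ℓ v w, A i j ℓ v w = 0 ∨ A i j ℓ v w = 1
  sum_apply_eq_one : ∀ i j (v w : Σ i, X i), v.1 = i → w.1 = j →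
    ∑ ℓ ∈ range (r i j + 1), A i j ℓ v w = 1
  transpose_eq : ∀ i j ℓ, ℓ ≤ r i j → (A i j ℓ)ᵀ = A j i ℓ
  sum_row_eq : ∀ i j ℓ, ℓ ≤ r i j → ∀ v : Σ i, X i, v.1 = i → ∑ w, A i j ℓ v w = k i j ℓ

namespace IsCoherentConfiguration

variable {r : ι → ι → ℕ} {A : ι → ι → ℕ → Matrix (Σ i, X i) (Σ i, X i) ℝ} {k : ι → ι → ℕ → ℝ}
  {p q : ι}

theorem apply_nonneg (hA : IsCoherentConfiguration r A k) (p q : ι) (b : ℕ) (v w : Σ i, X i) :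
    0 ≤ A p q b v w := by
  rcases hA.apply_eq_zero_or_eq_one p q b v w with h | h <;> simp [h]

theorem apply_eq_zero_of_lt (hA : IsCoherentConfiguration r A k) {b : ℕ} (hlt : r q p < b)
    (hb : b ≤ r p q) : A p q b = 0 := by
  ext v w
  by_cases hvw : v.1 = p ∧ w.1 = q
  · have htotal := hA.sum_apply_eq_one p q v w hvw.1 hvw.2
    have hshort : ∑ ℓ ∈ range (r q p + 1), A p q ℓ v w = 1 := by
      rw [← hA.sum_apply_eq_one q p w v hvw.2 hvw.1]
      refine sum_congr rfl fun ℓ hℓ => ?_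
      rw [← hA.transpose_eq p q ℓ (by grind), transpose_apply]
    have hrest : ∑ ℓ ∈ Ico (r q p + 1) (r p q + 1), A p q ℓ v w = 0 := by
      rw [range_eq_Ico] at htotal hshort
      rw [← sum_Ico_consecutive _ (Nat.zero_le _) (by omega : r q p + 1 ≤ r p q + 1),
        hshort] at htotal
      linarith
    exact (sum_eq_zero_iff_of_nonneg fun ℓ _ => hA.apply_nonneg p q ℓ v w).mp hrest b
      (mem_Ico.mpr ⟨by omega, by omega⟩)
  · exact hA.apply_eq_zero_off_block p q b hb v w (not_and_or.mp hvw)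

theorem r_symm (hA : IsCoherentConfiguration r A k)
    (hne : ∀ p q ℓ, ℓ ≤ r p q → A p q ℓ ≠ 0) (p q : ι) : r p q = r q p := by
  by_contra hpq
  rcases Nat.lt_or_gt_of_ne hpq with h | h
  · exact hne q p _ le_rfl (hA.apply_eq_zero_of_lt h le_rfl)
  · exact hne p q _ le_rfl (hA.apply_eq_zero_of_lt h le_rfl)

theorem sum_apply (hA : IsCoherentConfiguration r A k) {b : ℕ} (hb : b ≤ r p q) :
    ∑ v, ∑ w, A p q b v w = Fintype.card (X p) * k p q b := by
  classical
  have hrow : ∀ v : Σ i, X i, ∑ w, A p q b v w = if v.1 = p then k p q b else 0 := by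
    intro v
    split_ifs with hv
    · exact hA.sum_row_eq p q b hb v hv
    · exact sum_eq_zero fun w _ => hA.apply_eq_zero_off_block p q b hb v w (.inl hv)
  simp only [hrow, Fintype.sum_sigma]
  rw [Fintype.sum_eq_single p fun i hi => by simp [hi]]
  simp

theorem apply_mul_apply (hA : IsCoherentConfiguration r A k) {a b : ℕ} (ha : a ≤ r p q)
    (hb : b ≤ r p q) (v w : Σ i, X i) :
    A p q a v w * A p q b v w = if a = b then A p q a v w else 0 := by
  split_ifs with hab
  · subst hab
    rcases hA.apply_eq_zero_or_eq_one p q a v w with h | h <;> simp [h]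
  by_cases hvw : v.1 = p ∧ w.1 = q
  · have hle : A p q a v w + A p q b v w ≤ 1 := by
      rw [← sum_pair (f := fun ℓ => A p q ℓ v w) hab, ← hA.sum_apply_eq_one p q v w hvw.1 hvw.2]
      refine sum_le_sum_of_subset_of_nonneg ?_ fun ℓ _ _ => hA.apply_nonneg p q ℓ v w
      simp only [insert_subset_iff, singleton_subset_iff, mem_range]
      omega
    rcases hA.apply_eq_zero_or_eq_one p q a v w with h | h
    · simp [h]
    · have h' : A p q b v w = 0 := by linarith [hA.apply_nonneg p q b v w]
      simp [h']
  · simp [hA.apply_eq_zero_off_block p q a ha v w (not_and_or.mp hvw)]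

theorem trace_mul_transpose (hA : IsCoherentConfiguration r A k) {a b : ℕ} (ha : a ≤ r p q)
    (hb : b ≤ r p q) :
    trace (A p q a * (A p q b)ᵀ) = if a = b then Fintype.card (X p) * k p q a else 0 := by
  rw [← sum_hadamard_eq]
  simp only [hadamard_apply, hA.apply_mul_apply ha hb]
  split_ifs with hab
  · exact hA.sum_apply ha
  · simp

theorem card_mul_eq_card_mul (hA : IsCoherentConfiguration r A k) {b : ℕ} (hb : b ≤ r p q)
    (hb' : b ≤ r q p) : Fintype.card (X p) * k p q b = Fintype.card (X q) * k q p b := by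
  rw [← hA.sum_apply hb, ← hA.sum_apply hb', ← hA.transpose_eq p q b hb]
  exact sum_comm

theorem card_mul_pos (hA : IsCoherentConfiguration r A k) {b : ℕ} (hb : b ≤ r p q)
    (hne : A p q b ≠ 0) : 0 < Fintype.card (X p) * k p q b := by
  rw [← hA.sum_apply hb]
  obtain ⟨v, w, hvw⟩ : ∃ v w, A p q b v w ≠ 0 := by
    by_contra! h
    exact hne (Matrix.ext h)
  refine sum_pos' (fun v _ => sum_nonneg fun w _ => hA.apply_nonneg p q b v w) ⟨v, mem_univ v, ?_⟩
  exact sum_pos' (fun w _ => hA.apply_nonneg p q b v w) ⟨w, mem_univ w,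
    lt_of_le_of_ne (hA.apply_nonneg p q b v w) (Ne.symm hvw)⟩

theorem card_pos (hA : IsCoherentConfiguration r A k) {b : ℕ} (hb : b ≤ r p q)
    (hne : A p q b ≠ 0) : (0 : ℝ) < Fintype.card (X p) := by
  have hpos := hA.card_mul_pos hb hne
  exact (Nat.cast_nonneg _).lt_of_ne fun h => by simp [← h] at hpos

theorem trace_mul_mul_eq (hA : IsCoherentConfiguration r A k)
    {i j h : ι} {ℓ m n : ℕ} {c : ℕ → ℝ}
    (hc : A i j ℓ * A j h m = ∑ n ∈ range (r i h + 1), c n • A i h n) (hn : n ≤ r i h) :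
    trace (A i j ℓ * A j h m * A h i n) = c n * (Fintype.card (X i) * k i h n) := by
  rw [hc, ← hA.transpose_eq i h n hn, trace_sum_smul_mul,
    sum_eq_single_of_mem n (mem_range.mpr (by omega)) fun b hb hne => by
      rw [hA.trace_mul_transpose (Nat.lt_succ_iff.mp (mem_range.mp hb)) hn, if_neg hne,
        mul_zero],
    hA.trace_mul_transpose hn hn, if_pos rfl]

end IsCoherentConfiguration

/-- Conditions (B2)–(B4) on the matrices `E i j ν = E_ν^{(i,j)}`, `ν ≤ r i j`. -/
structure IsDualBasis [DecidableEq ι] (r : ι → ι → ℕ)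
    (E : ι → ι → ℕ → Matrix (Σ i, X i) (Σ i, X i) ℝ) : Prop where
  linearIndependent : ∀ i j, LinearIndependent ℝ (fun ℓ : Fin (r i j + 1) => E i j ℓ)
  transpose_eq : ∀ i j ℓ, ℓ ≤ r i j → (E i j ℓ)ᵀ = E j i ℓ
  mul_eq : ∀ i j i' j' ℓ ℓ', ℓ ≤ r i j → ℓ' ≤ r i' j' →
    E i j ℓ * E i' j' ℓ' = if ℓ = ℓ' ∧ j = i' then E i j' ℓ else 0

namespace IsDualBasis

variable [DecidableEq ι] {r : ι → ι → ℕ} {E : ι → ι → ℕ → Matrix (Σ i, X i) (Σ i, X i) ℝ}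
  {p q : ι} {ν : ℕ}

theorem ne_zero (hE : IsDualBasis r E) (hν : ν ≤ r p q) : E p q ν ≠ 0 :=
  (hE.linearIndependent p q).ne_zero ⟨ν, Nat.lt_succ_of_le hν⟩

theorem mul_swap_eq (hE : IsDualBasis r E) (hν : ν ≤ r p q) (hν' : ν ≤ r q p) :
    E p q ν * E q p ν = E p p ν := by
  simp [hE.mul_eq p q q p ν ν hν hν']

theorem trace_mul (hE : IsDualBasis r E) {a b : ℕ} (ha : a ≤ r p q) (hb : b ≤ r q p) :
    trace (E p q a * E q p b) = if a = b then trace (E p p a) else 0 := by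
  rw [hE.mul_eq p q q p a b ha hb]
  split_ifs <;> simp_all

theorem trace_pos (hE : IsDualBasis r E) (hν : ν ≤ r p q) (hν' : ν ≤ r q p) :
    0 < trace (E p p ν) := by
  rw [← hE.mul_swap_eq hν hν', ← hE.transpose_eq p q ν hν]
  exact trace_mul_transpose_self_pos (hE.ne_zero hν)

theorem trace_eq_trace (hE : IsDualBasis r E) (hν : ν ≤ r p q) (hν' : ν ≤ r q p) :
    trace (E p p ν) = trace (E q q ν) := by
  rw [← hE.mul_swap_eq hν hν', trace_mul_comm, hE.mul_swap_eq hν' hν]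

theorem mul_mul_eq {i j h : ι} {a b c : ℕ} (hE : IsDualBasis r E) (ha : a ≤ r i j)
    (ha' : a ≤ r j i) (hb : b ≤ r j h) (hc : c ≤ r h i) :
    E i j a * E j h b * E h i c = if a = b ∧ b = c then E i i a else 0 := by
  by_cases hab : a = b
  · subst hab
    rw [Matrix.mul_assoc, hE.mul_eq j h h i a c hb hc]
    by_cases hac : a = c
    · subst hac
      simp [hE.mul_swap_eq ha ha']
    · simp [hac]
  · simp [hE.mul_eq i j j h a b ha hb, hab]

end IsDualBasis

section Eigenmatrices

variable [DecidableEq ι] {r : ι → ι → ℕ} {A E : ι → ι → ℕ → Matrix (Σ i, X i) (Σ i, X i) ℝ}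
  {k : ι → ι → ℕ → ℝ} {Pm Qm : ι → ι → ℕ → ℕ → ℝ}

theorem IsDualBasis.adjacency_ne_zero (hE : IsDualBasis r E)
    (hQ : ∀ i j h, h ≤ r i j → E i j h = (√((Fintype.card (X i) : ℝ) * Fintype.card (X j)))⁻¹ •
      ∑ ℓ ∈ range (r i j + 1), Qm i j h ℓ • A i j ℓ) {p q : ι} {b : ℕ} (hb : b ≤ r p q) :
    A p q b ≠ 0 := by
  have hli : LinearIndependent ℝ fun ℓ : Fin (r p q + 1) => A p q ℓ := by
    refine (hE.linearIndependent p q).of_range_subset_span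
      (Set.range_subset_iff.mpr fun ν => ?_)
    rw [hQ p q ν (Nat.lt_succ_iff.mp ν.isLt)]
    refine Submodule.smul_mem _ _ (Submodule.sum_mem _ fun ℓ hℓ => Submodule.smul_mem _ _ ?_)
    exact Submodule.subset_span ⟨⟨ℓ, mem_range.mp hℓ⟩, rfl⟩
  exact hli.ne_zero ⟨b, Nat.lt_succ_of_le hb⟩

theorem first_eigenmatrix_mul_trace_eq (hA : IsCoherentConfiguration r A k)
    (hE : IsDualBasis r E)
    (hP : ∀ i j h, h ≤ r i j → A i j h = ∑ ℓ ∈ range (r i j + 1), Pm i j h ℓ • E i j ℓ)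
    (hQ : ∀ i j h, h ≤ r i j → E i j h = (√((Fintype.card (X i) : ℝ) * Fintype.card (X j)))⁻¹ •
      ∑ ℓ ∈ range (r i j + 1), Qm i j h ℓ • A i j ℓ)
    {p q : ι} {ℓ ν : ℕ} (hℓ : ℓ ≤ r p q) (hν : ν ≤ r p q) (hν' : ν ≤ r q p) :
    Pm p q ℓ ν * trace (E p p ν) =
      (√((Fintype.card (X p) : ℝ) * Fintype.card (X q)))⁻¹ *
        (Qm p q ν ℓ * (Fintype.card (X p) * k p q ℓ)) := by
  have hlt : ∀ {x}, x ≤ r p q → x ∈ range (r p q + 1) := fun hx => mem_range.mpr (by omega)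
  calc Pm p q ℓ ν * trace (E p p ν) = trace (A p q ℓ * E q p ν) := by
        rw [hP p q ℓ hℓ, trace_sum_smul_mul, sum_eq_single_of_mem ν (hlt hν) fun a ha hne => by
          rw [hE.trace_mul (Nat.lt_succ_iff.mp (mem_range.mp ha)) hν', if_neg hne, mul_zero],
          hE.trace_mul hν hν', if_pos rfl]
    _ = trace (E p q ν * (A p q ℓ)ᵀ) := by
        rw [← hE.transpose_eq p q ν hν, ← trace_transpose, transpose_mul, transpose_transpose]
    _ = _ := by
        rw [hQ p q ν hν, smul_mul, trace_smul, trace_sum_smul_mul,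
          sum_eq_single_of_mem ℓ (hlt hℓ) fun b hb hne => by
            rw [hA.trace_mul_transpose (Nat.lt_succ_iff.mp (mem_range.mp hb)) hℓ, if_neg hne,
              mul_zero],
          hA.trace_mul_transpose hℓ hℓ, if_pos rfl, smul_eq_mul]

theorem adjacency_mul_mul_eq_sum (hE : IsDualBasis r E) (hr : ∀ p q, r p q = r q p)
    (hP : ∀ i j h, h ≤ r i j → A i j h = ∑ ℓ ∈ range (r i j + 1), Pm i j h ℓ • E i j ℓ)
    {i j h : ι} {ℓ m n : ℕ} (hℓ : ℓ ≤ r i j) (hm : m ≤ r j h) (hn : n ≤ r h i) :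
    A i j ℓ * A j h m * A h i n = ∑ ν ∈ range (min (min (r i j) (r j h)) (r h i) + 1),
      (Pm i j ℓ ν * Pm j h m ν * Pm h i n ν) • E i i ν := by
  rw [hP i j ℓ hℓ, hP j h m hm, hP h i n hn]
  have hterm : ∀ c ∈ range (r h i + 1), ∀ b ∈ range (r j h + 1), ∀ a ∈ range (r i j + 1),
      (Pm i j ℓ a * Pm j h m b * Pm h i n c) • (E i j a * E j h b * E h i c) =
        if c = b ∧ b = a then (Pm i j ℓ c * Pm j h m c * Pm h i n c) • E i i c else 0 := by
    intro c hc b hb a ha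
    simp only [mem_range, Nat.lt_succ_iff] at ha hb hc
    rw [hE.mul_mul_eq ha (hr i j ▸ ha) hb hc]
    by_cases hcba : c = b ∧ b = a
    · obtain ⟨rfl, rfl⟩ := hcba
      simp
    · simp [hcba, show ¬(a = b ∧ b = c) by grind]
  simp only [Matrix.sum_mul, Matrix.mul_sum, smul_mul_smul_comm]
  rw [sum_congr rfl fun c hc => sum_congr rfl fun b hb => sum_congr rfl fun a ha =>
    hterm c hc b hb a ha, sum_sum_sum_ite_and]
  congr 1
  simp only [range_inter_range]
  congr 1
  omega

theorem first_eigenmatrix_triangle_mul_trace_eq (hA : IsCoherentConfiguration r A k)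
    (hE : IsDualBasis r E) (hr : ∀ p q, r p q = r q p)
    (hP : ∀ i j h, h ≤ r i j → A i j h = ∑ ℓ ∈ range (r i j + 1), Pm i j h ℓ • E i j ℓ)
    (hQ : ∀ i j h, h ≤ r i j → E i j h = (√((Fintype.card (X i) : ℝ) * Fintype.card (X j)))⁻¹ •
      ∑ ℓ ∈ range (r i j + 1), Qm i j h ℓ • A i j ℓ)
    {i j h : ι} {ℓ m n ν : ℕ} (hℓ : ℓ ≤ r i j) (hm : m ≤ r j h) (hn : n ≤ r h i)
    (hν : ν ≤ min (min (r i j) (r j h)) (r h i)) :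
    Pm i j ℓ ν * Pm j h m ν * Pm h i n ν * trace (E i i ν) =
      k i j ℓ * k j h m * k h i n *
        (1 / trace (E i i ν) ^ 2 * (Qm i j ν ℓ * Qm j h ν m * Qm h i ν n)) := by
  obtain ⟨⟨hij, hjh⟩, hhi⟩ := le_min_iff.mp hν |>.imp_left le_min_iff.mp
  have hcard : ∀ {p q b}, b ≤ r p q → (0 : ℝ) < Fintype.card (X p) := fun hb =>
    hA.card_pos hb (hE.adjacency_ne_zero hQ hb)
  have e₁ := first_eigenmatrix_mul_trace_eq hA hE hP hQ hℓ hij (hr i j ▸ hij)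
  have e₂ := first_eigenmatrix_mul_trace_eq hA hE hP hQ hm hjh (hr j h ▸ hjh)
  have e₃ := first_eigenmatrix_mul_trace_eq hA hE hP hQ hn hhi (hr h i ▸ hhi)
  rw [← hE.trace_eq_trace hij (hr i j ▸ hij)] at e₂
  rw [← hE.trace_eq_trace (hr h i ▸ hhi) hhi] at e₃
  exact mul_mul_mul_eq_of_mul_eq_inv_sqrt_mul (hcard hℓ) (hcard hm) (hcard hn)
    (hE.trace_pos hij (hr i j ▸ hij)).ne' e₁ e₂ e₃

end Eigenmatrices

theorem stmt15_general
    (nf : ℕ) (X : Fin nf → Type) [∀ i, Fintype (X i)]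
    (r : Fin nf → Fin nf → ℕ)
    (A E : Fin nf → Fin nf → ℕ → Matrix ((i : Fin nf) × X i) ((i : Fin nf) × X i) ℝ)
    (Pm Qm : Fin nf → Fin nf → ℕ → ℕ → ℝ)
    (k : Fin nf → Fin nf → ℕ → ℝ)
    (hAsupp : ∀ i j ℓ, ℓ ≤ r i j → ∀ v w : (i : Fin nf) × X i,
      (v.1 ≠ i ∨ w.1 ≠ j) → A i j ℓ v w = 0)
    (hA01 : ∀ i j ℓ v w, A i j ℓ v w = 0 ∨ A i j ℓ v w = 1)
    (hApart : ∀ i j (v w : (i : Fin nf) × X i), v.1 = i → w.1 = j →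
      ∑ ℓ ∈ Finset.range (r i j + 1), A i j ℓ v w = 1)
    (hAtrans : ∀ i j ℓ, ℓ ≤ r i j → (A i j ℓ)ᵀ = A j i ℓ)
    (hk : ∀ i j ℓ, ℓ ≤ r i j → ∀ v : (i : Fin nf) × X i, v.1 = i →
      ∑ w, A i j ℓ v w = k i j ℓ)
    (hB2 : ∀ i j, LinearIndependent ℝ (fun ℓ : Fin (r i j + 1) => E i j (ℓ : ℕ)))
    (hB3 : ∀ i j ℓ, ℓ ≤ r i j → (E i j ℓ)ᵀ = E j i ℓ)
    (hB4 : ∀ i j i' j' ℓ ℓ', ℓ ≤ r i j → ℓ' ≤ r i' j' →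
      E i j ℓ * E i' j' ℓ' = if ℓ = ℓ' ∧ j = i' then E i j' ℓ else 0)
    (hP : ∀ i j h, h ≤ r i j →
      A i j h = ∑ ℓ ∈ Finset.range (r i j + 1), Pm i j h ℓ • E i j ℓ)
    (hQ : ∀ i j h, h ≤ r i j →
      E i j h = (Real.sqrt ((Fintype.card (X i) : ℝ) * (Fintype.card (X j) : ℝ)))⁻¹ •
        ∑ ℓ ∈ Finset.range (r i j + 1), Qm i j h ℓ • A i j ℓ)
    (pint : Fin nf → Fin nf → Fin nf → ℕ → ℕ → ℕ → ℝ)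
    (hpint : ∀ i j h ℓ m, ℓ ≤ r i j → m ≤ r j h →
      A i j ℓ * A j h m = ∑ n ∈ Finset.range (r i h + 1), pint i j h ℓ m n • A i h n)
    (i j h : Fin nf) (ℓ m n : ℕ) (hℓ : ℓ ≤ r i j) (hm : m ≤ r j h) (hn : n ≤ r i h) :
    pint i j h ℓ m n =
      k i j ℓ * k j h m / (Fintype.card (X h) : ℝ) *
        ∑ ν ∈ Finset.range (min (min (r i j) (r j h)) (r h i) + 1),
          (1 / ((E i i ν).trace) ^ 2) * (Qm i j ν ℓ * Qm j h ν m * Qm h i ν n) := by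
  have hA : IsCoherentConfiguration r A k := ⟨hAsupp, hA01, hApart, hAtrans, hk⟩
  have hE : IsDualBasis r E := ⟨hB2, hB3, hB4⟩
  have hAne : ∀ p q b, b ≤ r p q → A p q b ≠ 0 := fun _ _ _ hb => hE.adjacency_ne_zero hQ hb
  have hr := hA.r_symm hAne
  have hn' : n ≤ r h i := hr i h ▸ hn
  have hsum : pint i j h ℓ m n * (Fintype.card (X i) * k i h n) =
      ∑ ν ∈ range (min (min (r i j) (r j h)) (r h i) + 1),
        Pm i j ℓ ν * Pm j h m ν * Pm h i n ν * trace (E i i ν) := by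
    rw [← hA.trace_mul_mul_eq (hpint i j h ℓ m hℓ hm) hn,
      adjacency_mul_mul_eq_sum hE hr hP hℓ hm hn', trace_sum]
    simp only [trace_smul, smul_eq_mul]
  rw [sum_congr rfl fun ν hν => first_eigenmatrix_triangle_mul_trace_eq hA hE hr hP hQ hℓ hm hn'
    (Nat.lt_succ_iff.mp (mem_range.mp hν)), ← mul_sum] at hsum
  refine mul_right_cancel₀ (hA.card_mul_pos hn (hAne i h n hn)).ne' ?_
  rw [hsum, hA.card_mul_eq_card_mul hn hn']
  field_simp [(hA.card_pos hn' (hAne h i n hn')).ne']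

/-- Explicit expression for the intersection numbers of a coherent configuration with basis (B1)-(B4): `p_{ℓ,m,n}^{(i,j,h)} = (k_ℓ^{(i,j)} k_m^{(j,h)} / |X_h|) Σ_ν q_ν^{(i,j)}(ℓ) q_ν^{(j,h)}(m) q_ν^{(h,i)}(n) / (m_ν^{(i,i)})²`, the sum over `ν` up to `min(r̃_{i,j}, r̃_{j,h}, r̃_{h,i})`, with `m_ν^{(i,i)} = tr E_ν^{(i,i)}`. -/
theorem stmt15
    (nf : ℕ) (X : Fin nf → Type) [∀ i, Fintype (X i)] [∀ i, DecidableEq (X i)]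
    (r : Fin nf → Fin nf → ℕ)
    (A E : Fin nf → Fin nf → ℕ → Matrix ((i : Fin nf) × X i) ((i : Fin nf) × X i) ℝ)
    (q : Fin nf → Fin nf → ℕ → ℕ → ℕ → ℝ)
    (Pm Qm : Fin nf → Fin nf → ℕ → ℕ → ℝ)
    (k : Fin nf → Fin nf → ℕ → ℝ)
    (hAsupp : ∀ i j ℓ, ℓ ≤ r i j → ∀ v w : (i : Fin nf) × X i,
      (v.1 ≠ i ∨ w.1 ≠ j) → A i j ℓ v w = 0)
    (hA01 : ∀ i j ℓ v w, A i j ℓ v w = 0 ∨ A i j ℓ v w = 1)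
    (hA0 : ∀ i, A i i 0 = Matrix.of fun v w => if v = w ∧ v.1 = i then 1 else 0)
    (hApart : ∀ i j (v w : (i : Fin nf) × X i), v.1 = i → w.1 = j →
      ∑ ℓ ∈ Finset.range (r i j + 1), A i j ℓ v w = 1)
    (hAtrans : ∀ i j ℓ, ℓ ≤ r i j → (A i j ℓ)ᵀ = A j i ℓ)
    (hk : ∀ i j ℓ, ℓ ≤ r i j → ∀ v : (i : Fin nf) × X i, v.1 = i →
      ∑ w, A i j ℓ v w = k i j ℓ)
    (hEsupp : ∀ i j ℓ, ℓ ≤ r i j → ∀ v w : (i : Fin nf) × X i,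
      (v.1 ≠ i ∨ w.1 ≠ j) → E i j ℓ v w = 0)
    (hB1 : ∀ i j, E i j 0 = Matrix.of fun v w =>
      if v.1 = i ∧ w.1 = j then
        (Real.sqrt ((Fintype.card (X i) : ℝ) * (Fintype.card (X j) : ℝ)))⁻¹ else 0)
    (hB2 : ∀ i j, LinearIndependent ℝ (fun ℓ : Fin (r i j + 1) => E i j (ℓ : ℕ)))
    (hB3 : ∀ i j ℓ, ℓ ≤ r i j → (E i j ℓ)ᵀ = E j i ℓ)
    (hB4 : ∀ i j i' j' ℓ ℓ', ℓ ≤ r i j → ℓ' ≤ r i' j' →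
      E i j ℓ * E i' j' ℓ' = if ℓ = ℓ' ∧ j = i' then E i j' ℓ else 0)
    (hq : ∀ i j ℓ m, ℓ ≤ r i j → m ≤ r i j →
      (E i j ℓ).hadamard (E i j m) =
        (Real.sqrt ((Fintype.card (X i) : ℝ) * (Fintype.card (X j) : ℝ)))⁻¹ •
          ∑ n ∈ Finset.range (r i j + 1), q i j ℓ m n • E i j n)
    (hP : ∀ i j h, h ≤ r i j →
      A i j h = ∑ ℓ ∈ Finset.range (r i j + 1), Pm i j h ℓ • E i j ℓ)
    (hQ : ∀ i j h, h ≤ r i j →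
      E i j h = (Real.sqrt ((Fintype.card (X i) : ℝ) * (Fintype.card (X j) : ℝ)))⁻¹ •
        ∑ ℓ ∈ Finset.range (r i j + 1), Qm i j h ℓ • A i j ℓ)
    (pint : Fin nf → Fin nf → Fin nf → ℕ → ℕ → ℕ → ℝ)
    (hpint : ∀ i j h ℓ m, ℓ ≤ r i j → m ≤ r j h →
      A i j ℓ * A j h m = ∑ n ∈ Finset.range (r i h + 1), pint i j h ℓ m n • A i h n)
    (i j h : Fin nf) (ℓ m n : ℕ) (hℓ : ℓ ≤ r i j) (hm : m ≤ r j h) (hn : n ≤ r i h) :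
    pint i j h ℓ m n =
      k i j ℓ * k j h m / (Fintype.card (X h) : ℝ) *
        ∑ ν ∈ Finset.range (min (min (r i j) (r j h)) (r h i) + 1),
          (1 / ((E i i ν).trace) ^ 2) * (Qm i j ν ℓ * Qm j h ν m * Qm h i ν n) :=
  stmt15_general nf X r A E Pm Qm k hAsupp hA01 hApart hAtrans hk hB2 hB3 hB4 hP hQ pint hpint i j h
    ℓ m n hℓ hm hn
end

section
/- Let E_α, E_β be primitive idempotents of a symmetric association scheme on X with Krein numbers q_{α,β}^ℓ, and let Y ⊆ X be a Delsarte t-design with dual inner distribution (b_ℓ). If q_{α,β}^ℓ = 0 for all ℓ > t, then |X| E_α Δ_Y E_β = |Y| δ_{α,β} E_α, where Δ_Y is the diagonal 0-1 matrix of Y. (Key step: ||X| E_α Δ_Y E_β − |Y| δ_{α,β} E_α|² = |Y| Σ_{ℓ=1}^d q_{α,β}^ℓ b_ℓ, where ‖A‖² = tr(A Aᵀ).) -/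
open Matrix Finset

/-!
For a symmetric matrix `B`, `tr (A Δ_w B Δ_v) = v ⬝ (A ∘ B) w`, so the Krein condition
`E_i ∘ E_j = |X|⁻¹ ∑ q_{ij}^h E_h` turns every trace of the form `tr (E_i Δ_w E_j Δ_v)` into the
combination `|X|⁻¹ ∑_h q_{ij}^h (v ⬝ E_h w)`. Expanding `tr (M Mᵀ)` for
`M = |X| E_α Δ_Y E_β - δ_{αβ} |Y| E_α` in this way, the contributions of `E_0 = J / |X|` cancel and
`tr (M Mᵀ) = |X| ∑_{h ≠ 0} q_{αβ}^h χᵀ E_h χ`. Each summand vanishes, because `E_h χ = 0` for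
`h ≤ t` and `q_{αβ}^h = 0` for `h > t`; and a real matrix with `tr (M Mᵀ) = 0` is zero.
-/

namespace Matrix

variable {X R : Type*} [Fintype X] [CommSemiring R]

theorem dotProduct_hadamard_mulVec_eq_trace [DecidableEq X] {A B : Matrix X X R} (hB : B.IsSymm)
    (v w : X → R) : v ⬝ᵥ (A ⊙ B) *ᵥ w = (A * diagonal w * B * diagonal v).trace := by
  rw [dotProduct_mulVec, dotProduct_vecMul_hadamard, transpose_mul, hB.eq, diagonal_transpose,
    Matrix.mul_assoc, trace_mul_comm]
  simp only [Matrix.mul_assoc]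

theorem trace_mul_transpose_self_of_isIdempotentElem {E F D : Matrix X X R} (hE : E.IsSymm)
    (hF : F.IsSymm) (hD : D.IsSymm) (hEE : IsIdempotentElem E) (hFF : IsIdempotentElem F) :
    (E * D * F * (E * D * F)ᵀ).trace = (E * D * F * D).trace := by
  rw [transpose_mul, transpose_mul, hE.eq, hF.eq, hD.eq]
  have hF' : ∀ M, F * (F * M) = F * M := fun M => by rw [← Matrix.mul_assoc, hFF.eq]
  have hE' : ∀ M, E * (E * M) = E * M := fun M => by rw [← Matrix.mul_assoc, hEE.eq]
  calc (E * D * F * (F * (D * E))).trace = (E * D * F * D * E).trace := by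
        simp only [Matrix.mul_assoc, hF']
    _ = (E * (E * D * F * D)).trace := trace_mul_comm _ _
    _ = (E * D * F * D).trace := by simp only [Matrix.mul_assoc, hE']

theorem trace_mul_transpose_self_eq_zero_iff {m n : Type*} [Fintype m] [Fintype n]
    {A : Matrix m n ℝ} : (A * Aᵀ).trace = 0 ↔ A = 0 := by
  simpa [conjTranspose_eq_transpose_of_trivial] using
    trace_mul_conjTranspose_self_eq_zero_iff (A := A)

end Matrix

variable {X ι : Type*} [Fintype X] [Fintype ι] [DecidableEq ι]

/-- The primitive idempotents `E i` of a symmetric association scheme, with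
`E i₀ = J / |X|`, and its Krein numbers `q i j h`. -/
structure IsKreinSystem (E : ι → Matrix X X ℝ) (i₀ : ι) (q : ι → ι → ι → ℝ) : Prop where
  trivial_eq : E i₀ = (Fintype.card X : ℝ)⁻¹ • of fun _ _ => 1
  isSymm : ∀ i, (E i).IsSymm
  mul : ∀ i j, E i * E j = if i = j then E i else 0
  hadamard : ∀ i j, E i ⊙ E j = (Fintype.card X : ℝ)⁻¹ • ∑ h, q i j h • E h

noncomputable def designDefect [DecidableEq X] (E : ι → Matrix X X ℝ) (α β : ι) (v : X → ℝ) :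
    Matrix X X ℝ :=
  (Fintype.card X : ℝ) • (E α * diagonal v * E β) - if α = β then (∑ x, v x) • E α else 0

namespace IsKreinSystem

variable {E : ι → Matrix X X ℝ} {i₀ : ι} {q : ι → ι → ι → ℝ}

theorem isIdempotentElem (hE : IsKreinSystem E i₀ q) (i : ι) : IsIdempotentElem (E i) := by
  simpa [IsIdempotentElem] using hE.mul i i

theorem mulVec_one (hE : IsKreinSystem E i₀ q) (i : ι) :
    E i *ᵥ 1 = if i = i₀ then 1 else 0 := by
  have h₀ : E i₀ *ᵥ 1 = 1 := by
    ext x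
    have : Nonempty X := ⟨x⟩
    simp [hE.trivial_eq, mulVec, dotProduct]
  split_ifs with hi
  · rwa [hi]
  · rw [← h₀, mulVec_mulVec, hE.mul, if_neg hi, zero_mulVec]

theorem one_dotProduct_mulVec (hE : IsKreinSystem E i₀ q) (i : ι) (v : X → ℝ) :
    1 ⬝ᵥ E i *ᵥ v = if i = i₀ then ∑ x, v x else 0 := by
  rw [dotProduct_mulVec, ← mulVec_transpose, (hE.isSymm i).eq, hE.mulVec_one]
  split_ifs <;> simp [one_dotProduct]

theorem dotProduct_trivial_mulVec (hE : IsKreinSystem E i₀ q) (v w : X → ℝ) :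
    v ⬝ᵥ E i₀ *ᵥ w = (Fintype.card X : ℝ)⁻¹ * (∑ x, v x) * ∑ x, w x := by
  simp [hE.trivial_eq, mulVec, dotProduct, Finset.mul_sum, Finset.sum_mul, mul_comm,
    mul_left_comm]

variable [DecidableEq X]

theorem trace_mul_diagonal_mul_mul_diagonal (hE : IsKreinSystem E i₀ q) (i j : ι)
    (v w : X → ℝ) : (E i * diagonal w * E j * diagonal v).trace =
      (Fintype.card X : ℝ)⁻¹ * ∑ h, q i j h * (v ⬝ᵥ E h *ᵥ w) := by
  rw [← dotProduct_hadamard_mulVec_eq_trace (hE.isSymm j), hE.hadamard, smul_mulVec, sum_mulVec,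
    dotProduct_smul, dotProduct_sum, smul_eq_mul]
  simp only [smul_mulVec, dotProduct_smul, smul_eq_mul]

theorem krein_trivial_eq [Nonempty X] (hE : IsKreinSystem E i₀ q) (i j : ι) :
    q i j i₀ = if i = j then (E i).trace else 0 := by
  have h := hE.trace_mul_diagonal_mul_mul_diagonal i j 1 1
  rw [show diagonal (1 : X → ℝ) = 1 from diagonal_one, Matrix.mul_one, Matrix.mul_one,
    hE.mul, apply_ite trace, trace_zero] at h
  simp only [hE.one_dotProduct_mulVec, mul_ite, mul_zero, sum_ite_eq', mem_univ, if_true,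
    Pi.one_apply, sum_const, card_univ, nsmul_eq_mul, mul_one] at h
  rw [h]
  field_simp

theorem trace_mul_diagonal [Nonempty X] (hE : IsKreinSystem E i₀ q) (i : ι) (v : X → ℝ) :
    (E i * diagonal v).trace = (Fintype.card X : ℝ)⁻¹ * ((E i).trace * ∑ x, v x) := by
  have h := hE.trace_mul_diagonal_mul_mul_diagonal i i 1 v
  simp only [show diagonal (1 : X → ℝ) = 1 from diagonal_one, Matrix.mul_one,
    hE.one_dotProduct_mulVec, mul_ite, mul_zero, sum_ite_eq', mem_univ, if_true,
    hE.krein_trivial_eq] at h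
  rw [← h, trace_mul_comm _ (E i), ← Matrix.mul_assoc, (hE.isIdempotentElem i).eq]

theorem trace_mul_diagonal_mul_mul_transpose_self (hE : IsKreinSystem E i₀ q) (α β : ι) (v : X → ℝ) :
    (E α * diagonal v * E β * (E α * diagonal v * E β)ᵀ).trace =
      (Fintype.card X : ℝ)⁻¹ * ∑ h, q α β h * (v ⬝ᵥ E h *ᵥ v) := by
  rw [trace_mul_transpose_self_of_isIdempotentElem (hE.isSymm α) (hE.isSymm β)
    (isSymm_diagonal v) (hE.isIdempotentElem α) (hE.isIdempotentElem β),
    hE.trace_mul_diagonal_mul_mul_diagonal]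

theorem trace_designDefect_mul_transpose (hE : IsKreinSystem E i₀ q) (α β : ι) (v : X → ℝ) :
    (designDefect E α β v * (designDefect E α β v)ᵀ).trace =
      (Fintype.card X : ℝ) * ∑ h ∈ univ.erase i₀, q α β h * (v ⬝ᵥ E h *ᵥ v) := by
  cases isEmpty_or_nonempty X
  · simp [trace]
  set n : ℝ := (Fintype.card X : ℝ)
  set A := E α * diagonal v * E β with hA
  have hn : n ≠ 0 := by positivity
  have hAA : (A * Aᵀ).trace = n⁻¹ * (q α β i₀ * (n⁻¹ * (∑ x, v x) ^ 2) +
      ∑ h ∈ univ.erase i₀, q α β h * (v ⬝ᵥ E h *ᵥ v)) := by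
    rw [hE.trace_mul_diagonal_mul_mul_transpose_self, ← add_sum_erase _ _ (mem_univ i₀),
      hE.dotProduct_trivial_mulVec]
    ring
  by_cases hαβ : α = β
  · subst hαβ
    have hAT : Aᵀ = A := by
      rw [hA, transpose_mul, transpose_mul, (hE.isSymm α).eq, diagonal_transpose, Matrix.mul_assoc]
    have hAE : (A * E α).trace = (E α * diagonal v).trace := by
      rw [hA, Matrix.mul_assoc, (hE.isIdempotentElem α).eq, trace_mul_comm, ← Matrix.mul_assoc,
        (hE.isIdempotentElem α).eq]
    have hEA : (E α * A).trace = (E α * diagonal v).trace := by rw [trace_mul_comm, hAE]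
    have hM : designDefect E α α v = n • A - (∑ x, v x) • E α := by
      rw [designDefect, if_pos rfl]
    rw [hM, transpose_sub, transpose_smul, transpose_smul, (hE.isSymm α).eq, sub_mul,
      mul_sub, mul_sub, trace_sub, trace_sub, trace_sub]
    simp only [smul_mul_smul_comm, trace_smul, smul_eq_mul]
    rw [hAA, hAT, hAE, hEA, (hE.isIdempotentElem α).eq, hE.trace_mul_diagonal,
      hE.krein_trivial_eq, if_pos rfl]
    field_simp
    ring
  · have hM : designDefect E α β v = n • A := by rw [designDefect, if_neg hαβ, sub_zero]
    rw [hM, transpose_smul, smul_mul_smul_comm, trace_smul, smul_eq_mul, hAA,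
      hE.krein_trivial_eq, if_neg hαβ]
    field_simp
    ring

end IsKreinSystem

theorem stmt16_general {X : Type} [Fintype X] [DecidableEq X] (d : ℕ)
    (E : Fin (d + 1) → Matrix X X ℝ)
    (hE0 : E 0 = ((Fintype.card X : ℝ))⁻¹ • Matrix.of fun _ _ => (1 : ℝ))
    (hEsymm : ∀ i, (E i).IsSymm)
    (hEmul : ∀ i j, E i * E j = if i = j then E i else 0)
    (q : Fin (d + 1) → Fin (d + 1) → Fin (d + 1) → ℝ)
    (hq : ∀ i j, (E i).hadamard (E j) = ((Fintype.card X : ℝ))⁻¹ • ∑ h, q i j h • E h)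
    (Y : Finset X) (t : ℕ)
    (χ : X → ℝ) (hχ : χ = fun x => if x ∈ Y then 1 else 0)
    (hdesign : ∀ ℓ : Fin (d + 1), 1 ≤ (ℓ : ℕ) → (ℓ : ℕ) ≤ t → E ℓ *ᵥ χ = 0)
    (b : Fin (d + 1) → ℝ)
    (hb : ∀ ℓ, b ℓ = ((Fintype.card X : ℝ) / (Y.card : ℝ)) * (χ ⬝ᵥ (E ℓ *ᵥ χ)))
    (α β : Fin (d + 1))
    (hq0 : ∀ ℓ : Fin (d + 1), t < (ℓ : ℕ) → q α β ℓ = 0) :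
    let Δ : Matrix X X ℝ := Matrix.diagonal fun x => if x ∈ Y then 1 else 0
    let M : Matrix X X ℝ := (Fintype.card X : ℝ) • (E α * Δ * E β) -
      (if α = β then (Y.card : ℝ) • E α else 0)
    (M * Mᵀ).trace =
      (Y.card : ℝ) * ∑ ℓ ∈ Finset.univ.filter (fun ℓ : Fin (d + 1) => 1 ≤ (ℓ : ℕ)),
        q α β ℓ * b ℓ ∧
    (Fintype.card X : ℝ) • (E α * Δ * E β) = if α = β then (Y.card : ℝ) • E α else 0 := by
  intro Δ M
  have hE : IsKreinSystem E 0 q := ⟨hE0, hEsymm, hEmul, hq⟩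
  have hvanish : ∀ ℓ : Fin (d + 1), ℓ ≠ 0 → q α β ℓ * (χ ⬝ᵥ E ℓ *ᵥ χ) = 0 := by
    intro ℓ hℓ
    rcases le_or_gt (ℓ : ℕ) t with hle | hlt
    · rw [hdesign ℓ ((Fin.pos_iff_ne_zero' ℓ).mpr hℓ) hle, dotProduct_zero, mul_zero]
    · rw [hq0 ℓ hlt, zero_mul]
  have hcard : ∑ x, χ x = Y.card := by simp [hχ]
  have hM : M = designDefect E α β χ := by
    rw [designDefect, hcard]
    subst hχ
    rfl
  have htrace : (M * Mᵀ).trace = 0 := by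
    rw [hM, hE.trace_designDefect_mul_transpose,
      sum_eq_zero fun ℓ hℓ => hvanish ℓ (ne_of_mem_erase hℓ), mul_zero]
  refine ⟨htrace.trans ?_, sub_eq_zero.mp (trace_mul_transpose_self_eq_zero_iff.mp htrace)⟩
  refine (mul_eq_zero_of_right _ (sum_eq_zero fun ℓ hℓ => ?_)).symm
  rw [hb, mul_left_comm, hvanish ℓ ((Fin.pos_iff_ne_zero' ℓ).mp (mem_filter.mp hℓ).2), mul_zero]

/-- If `Y` is a Delsarte `t`-design in a symmetric association scheme and the Krein numbers
satisfy `q_{α,β}^ℓ = 0` for all `ℓ > t`, then `|X| E_α Δ_Y E_β = |Y| δ_{α,β} E_α`.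
Key step: `‖|X| E_α Δ_Y E_β − |Y| δ_{α,β} E_α‖² = |Y| Σ_{ℓ=1}^d q_{α,β}^ℓ b_ℓ`,
where `‖A‖² = tr(A Aᵀ)` and `(b_ℓ)` is the dual inner distribution of `Y`. -/
theorem stmt16 {X : Type} [Fintype X] [DecidableEq X] (d : ℕ)
    (E : Fin (d + 1) → Matrix X X ℝ)
    (hE0 : E 0 = ((Fintype.card X : ℝ))⁻¹ • Matrix.of fun _ _ => (1 : ℝ))
    (hEsymm : ∀ i, (E i).IsSymm)
    (hEmul : ∀ i j, E i * E j = if i = j then E i else 0)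
    (hEsum : ∑ i, E i = 1)
    (q : Fin (d + 1) → Fin (d + 1) → Fin (d + 1) → ℝ)
    (hq : ∀ i j, (E i).hadamard (E j) = ((Fintype.card X : ℝ))⁻¹ • ∑ h, q i j h • E h)
    (Y : Finset X) (hYne : Y.Nonempty) (t : ℕ)
    (χ : X → ℝ) (hχ : χ = fun x => if x ∈ Y then 1 else 0)
    (hdesign : ∀ ℓ : Fin (d + 1), 1 ≤ (ℓ : ℕ) → (ℓ : ℕ) ≤ t → E ℓ *ᵥ χ = 0)
    (b : Fin (d + 1) → ℝ)
    (hb : ∀ ℓ, b ℓ = ((Fintype.card X : ℝ) / (Y.card : ℝ)) * (χ ⬝ᵥ (E ℓ *ᵥ χ)))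
    (α β : Fin (d + 1))
    (hq0 : ∀ ℓ : Fin (d + 1), t < (ℓ : ℕ) → q α β ℓ = 0) :
    let Δ : Matrix X X ℝ := Matrix.diagonal fun x => if x ∈ Y then 1 else 0
    let M : Matrix X X ℝ := (Fintype.card X : ℝ) • (E α * Δ * E β) -
      (if α = β then (Y.card : ℝ) • E α else 0)
    (M * Mᵀ).trace =
      (Y.card : ℝ) * ∑ ℓ ∈ Finset.univ.filter (fun ℓ : Fin (d + 1) => 1 ≤ (ℓ : ℕ)),
        q α β ℓ * b ℓ ∧
    (Fintype.card X : ℝ) • (E α * Δ * E β) = if α = β then (Y.card : ℝ) • E α else 0 :=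
  stmt16_general d E hE0 hEsymm hEmul q hq Y t χ hχ hdesign b hb α β hq0
end
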